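/- arXiv:0905.4372 — 5 statements merged into one kernel-verified Lean document; each statement's English description precedes it below -/
import Mathlib

section
/- Let p be a prime, H a cyclic subgroup of F̄_p^× of order h with h ∤ p² - 1, and D the subgroup of GL₂(F̄_p) generated by [[0,1],[1,0]] and the diagonal matrices diag(x, x⁻¹) for x ∈ H. Then not all traces of elements of D lie in the prime subfield F_p. -/
theorem stmt_3 (p : ℕ) [Fact p.Prime]
    (H : Subgroup (AlgebraicClosure (ZMod p))ˣ) [Finite H] (hcyc : IsCyclic H)
    (h : ℕ) (hh : h = Nat.card H) (hdvd : ¬ h ∣ p ^ 2 - 1)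
    (D : Subgroup (GL (Fin 2) (AlgebraicClosure (ZMod p))))
    (hD : D = Subgroup.closure
      {g : GL (Fin 2) (AlgebraicClosure (ZMod p)) |
        (g : Matrix (Fin 2) (Fin 2) (AlgebraicClosure (ZMod p))) = !![0, 1; 1, 0] ∨
        ∃ x ∈ H, (g : Matrix (Fin 2) (Fin 2) (AlgebraicClosure (ZMod p))) =
          !![(x : AlgebraicClosure (ZMod p)), 0; 0, ((x : (AlgebraicClosure (ZMod p))ˣ)⁻¹ :
            (AlgebraicClosure (ZMod p))ˣ)]}) :
    ¬ ∀ g ∈ D, Matrix.trace (g : Matrix (Fin 2) (Fin 2) (AlgebraicClosure (ZMod p))) ∈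
      Set.range (algebraMap (ZMod p) (AlgebraicClosure (ZMod p))) := by
  intro htr
  set K := AlgebraicClosure (ZMod p) with hK
  have hp : p.Prime := Fact.out
  have key : ∀ x : Kˣ, x ∈ H → x ^ (p ^ 2 - 1) = 1 := by
    intro x hx
    have ha0 : (x : K) ≠ 0 := Units.ne_zero x
    have hxinv : (x : K) * ((x⁻¹ : Kˣ) : K) = 1 := by
      rw [Units.val_inv_eq_inv_val]
      exact mul_inv_cancel₀ ha0
    set g : GL (Fin 2) K :=
      (⟨!![(x:K), 0; 0, ((x⁻¹:Kˣ):K)], !![((x⁻¹:Kˣ):K), 0; 0, (x:K)],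
        by ext i j; fin_cases i <;> fin_cases j <;>
          simp [Matrix.mul_apply, Fin.sum_univ_two, hxinv, mul_comm],
        by ext i j; fin_cases i <;> fin_cases j <;>
          simp [Matrix.mul_apply, Fin.sum_univ_two, hxinv, mul_comm]⟩ :
        (Matrix (Fin 2) (Fin 2) K)ˣ) with hg
    have hgD : g ∈ D := by
      rw [hD]
      apply Subgroup.subset_closure
      right
      exact ⟨x, hx, rfl⟩
    obtain ⟨t, ht⟩ := htr g hgD
    have htr2 : algebraMap (ZMod p) K t = (x:K) + (x:K)⁻¹ := by
      rw [ht, hg]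
      simp [Matrix.trace_fin_two, Units.val_inv_eq_inv_val]
    have ht_pow : (algebraMap (ZMod p) K t) ^ p = algebraMap (ZMod p) K t := by
      rw [← map_pow, ZMod.pow_card]
    set a : K := (x : K) with haa
    have hainv : a * a⁻¹ = 1 := mul_inv_cancel₀ ha0
    have hquad : a ^ 2 - (algebraMap (ZMod p) K t) * a + 1 = 0 := by
      rw [htr2]
      linear_combination -hainv
    have h2 := congrArg (frobenius K p) hquad
    simp only [map_sub, map_add, map_mul, map_one, map_pow, map_zero,
      frobenius_def, ht_pow] at h2
    rw [htr2] at h2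
    have hfac : (a ^ p - a) * (a ^ p - a⁻¹) = 0 := by
      linear_combination h2 + hainv
    have hsq : a ^ (p ^ 2) = a := by
      rcases mul_eq_zero.mp hfac with hc | hc
      · have hc' : a ^ p = a := sub_eq_zero.mp hc
        rw [pow_two, pow_mul, hc', hc']
      · have hc' : a ^ p = a⁻¹ := sub_eq_zero.mp hc
        rw [pow_two, pow_mul, hc', inv_pow, hc', inv_inv]
    have hpow : a ^ (p ^ 2 - 1) = 1 := by
      have hp2 : p ^ 2 - 1 + 1 = p ^ 2 := Nat.succ_pred_eq_of_pos (pow_pos hp.pos 2)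
      have : a ^ (p ^ 2 - 1) * a = 1 * a := by
        rw [one_mul, ← pow_succ, hp2, hsq]
      exact mul_right_cancel₀ ha0 this
    exact Units.ext (by simpa using hpow)
  obtain ⟨g, hgen⟩ := hcyc.exists_generator
  have hfin : Fintype H := Fintype.ofFinite H
  have horder : orderOf g = Nat.card H :=
    orderOf_eq_card_of_forall_mem_zpowers hgen
  have hg1 : g ^ (p ^ 2 - 1) = 1 := by
    have := key (g : Kˣ) g.2
    ext
    simpa using congrArg Units.val this
  have : orderOf g ∣ p ^ 2 - 1 := orderOf_dvd_of_pow_eq_one hg1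
  rw [horder, ← hh] at this
  exact hdvd this
end

section
/- Let B be the set of positive integers congruent to 3 mod 4 and A ⊆ B the subset of squarefree such integers. For N ≥ 1 let A_N = ⋃_{n=1}^N (2n−1)²·A. Then the natural density of A_N in B equals (8/π²)·∑_{n=1}^N 1/(2n−1)², and hence tends to 1 as N → ∞. -/
open Real Filter

noncomputable def cnt (A : Set ℕ) (x : ℕ) : ℕ := (A ∩ Set.Iio x).ncard

/-- `A` has natural density `α` in `B`. -/
def relDensity (A B : Set ℕ) (α : ℝ) : Prop :=
  Filter.Tendsto (fun x => (cnt A x : ℝ) / (cnt B x : ℝ)) Filter.atTop (nhds α)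

/-!
Every `m ≡ 3 mod 4` is uniquely `d² a` with `d` odd and `a ∈ A`, so with `f = cnt A` and
`g = cnt B` one has `g x = ∑ₖ f ⌈x / (2k+1)²⌉`, while `g x ~ x / 4`. This identity determines the
density of `A`: put `S = ∑ₖ 1 / (2k+1)² = π² / 8`, `α = (1/4) / S` and
`D = limsup |f x / x - α|`. The term `k = 0` is `f x` itself, the terms `k ≥ 1` are asymptotically
within `D / (2k+1)²` of `α x / (2k+1)²`, hence `D ≤ (S - 1) D`; as `S - 1 < 1`, `D = 0`. The set
`A_N` is counted by the first `N` terms of the same sum, which gives its density.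
-/

open Finset Function Topology

lemma cnt_eq_card_filter (S : Set ℕ) [DecidablePred (· ∈ S)] (x : ℕ) :
    cnt S x = #{n ∈ range x | n ∈ S} := by
  rw [cnt, ← Set.ncard_coe_finset]
  congr 1
  ext n
  simp [and_comm]

lemma cnt_le_sub_one {S : Set ℕ} (hS : 0 ∉ S) (x : ℕ) : cnt S x ≤ x - 1 := by
  have hsub : S ∩ Set.Iio x ⊆ Set.Ioo 0 x := fun n ⟨hn, hnx⟩ =>
    ⟨Nat.pos_of_ne_zero fun h => hS (h ▸ hn), hnx⟩
  calc cnt S x ≤ (Set.Ioo 0 x).ncard := Set.ncard_le_ncard hsub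
    _ = x - 1 := by rw [← coe_Ioo, Set.ncard_coe_finset, Nat.card_Ioo, Nat.sub_zero]

lemma cnt_biUnion {ι : Type*} (s : Finset ι) {T : ι → Set ℕ}
    (hT : (s : Set ι).PairwiseDisjoint T) (x : ℕ) :
    cnt (⋃ i ∈ s, T i) x = ∑ i ∈ s, cnt (T i) x := by
  classical
  simp only [cnt_eq_card_filter]
  rw [← card_biUnion]
  · congr 1
    ext n
    simp only [mem_filter, mem_range, Set.mem_iUnion, mem_biUnion, exists_prop]
    tauto
  · intro i hi j hj hij
    exact disjoint_filter_filter' _ _ (hT hi hj hij)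

namespace Nat

lemma lt_ceilDiv_iff_mul_lt {a c x : ℕ} (hc : 0 < c) : a < x ⌈/⌉ c ↔ c * a < x := by
  rw [← not_le, ceilDiv_le_iff_le_mul hc, not_le]

lemma mul_ceilDiv_lt (x : ℕ) {c : ℕ} (hc : 0 < c) : c * (x ⌈/⌉ c) < x + c := by
  have := Nat.mul_div_le (x + c - 1) c
  rw [Nat.ceilDiv_eq_add_pred_div]
  omega

lemma tendsto_ceilDiv_atTop {c : ℕ} (hc : 0 < c) :
    Tendsto (fun x : ℕ => x ⌈/⌉ c) atTop atTop :=
  (gc_mul_ceilDiv hc).monotone_l.tendsto_atTop_atTop fun b => ⟨c * b, (smul_ceilDiv hc b).ge⟩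

end Nat

lemma cnt_image_mul (S : Set ℕ) {c : ℕ} (hc : 0 < c) (x : ℕ) :
    cnt ((c * ·) '' S) x = cnt S (x ⌈/⌉ c) := by
  have hpre : (c * ·) ⁻¹' Set.Iio x = Set.Iio (x ⌈/⌉ c) := by
    ext a
    exact (Nat.lt_ceilDiv_iff_mul_lt hc).symm
  rw [cnt, ← Set.image_inter_preimage, hpre,
    Set.ncard_image_of_injective _ (mul_right_injective₀ hc.ne'), cnt]

lemma abs_mul_sub_div_le {u r α c x : ℝ} (hu0 : 0 ≤ u) (hu1 : u ≤ 1) (hc : 0 < c)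
    (hr : 1 / c ≤ r) (hr' : r ≤ 1 / c + 1 / x) : |u * r - α / c| ≤ |u - α| / c + 1 / x := by
  have hdev : 0 ≤ u * (r - 1 / c) := mul_nonneg hu0 (by linarith)
  calc |u * r - α / c| = |(u - α) / c + u * (r - 1 / c)| := by ring_nf
    _ ≤ |(u - α) / c| + |u * (r - 1 / c)| := abs_add_le _ _
    _ ≤ |u - α| / c + 1 / x := by
      rw [abs_div, abs_of_pos hc, abs_of_nonneg hdev]
      gcongr
      exact (mul_le_of_le_one_left (by linarith) hu1).trans (by linarith)

section CeilDivCounting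

variable {f : ℕ → ℕ}

lemma abs_div_sub_le_of_ceilDiv (hf : ∀ y, f y ≤ y) {c x : ℕ} (hc : 0 < c) (hx : 0 < x)
    (α : ℝ) : |(f (x ⌈/⌉ c) : ℝ) / x - α / c|
      ≤ |(f (x ⌈/⌉ c) : ℝ) / (x ⌈/⌉ c : ℕ) - α| / c + 1 / x := by
  set y := x ⌈/⌉ c
  have hlow : x ≤ c * y := le_smul_ceilDiv hc
  have hupp : c * y < x + c := Nat.mul_ceilDiv_lt x hc
  have hy : 0 < y := Nat.pos_of_ne_zero fun h => by simp [h] at hlow; omega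
  have hcR : (0 : ℝ) < c := by exact_mod_cast hc
  have hxR : (0 : ℝ) < x := by exact_mod_cast hx
  have hyR : (0 : ℝ) < y := by exact_mod_cast hy
  have hlowR : (x : ℝ) ≤ c * y := by exact_mod_cast hlow
  have huppR : (c : ℝ) * y ≤ x + c := by exact_mod_cast hupp.le
  rw [show (f y : ℝ) / x = (f y / y) * (y / x) by field_simp]
  refine abs_mul_sub_div_le (by positivity) ?_ hcR ?_ ?_
  · exact div_le_one_of_le₀ (by exact_mod_cast hf y) hyR.le
  · rw [div_le_div_iff₀ hcR hxR]; linarith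
  · rw [div_add_div _ _ hcR.ne' hxR.ne', div_le_div_iff₀ hxR (by positivity)]; nlinarith

lemma cast_apply_ceilDiv_le_div (hf : ∀ y, f y ≤ y - 1) (x : ℕ) {c : ℕ} (hc : 0 < c) :
    (f (x ⌈/⌉ c) : ℝ) ≤ x / c := by
  have h : c * f (x ⌈/⌉ c) ≤ x := by
    have := Nat.mul_ceilDiv_lt x hc
    calc c * f (x ⌈/⌉ c) ≤ c * (x ⌈/⌉ c - 1) := Nat.mul_le_mul_left c (hf _)
      _ ≤ x := by rw [Nat.mul_sub_one]; omega
  rw [le_div_iff₀ (by exact_mod_cast hc), mul_comm]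
  exact_mod_cast h

lemma tendsto_comp_ceilDiv_div (hf : ∀ y, f y ≤ y) {c : ℕ} (hc : 0 < c) {α : ℝ}
    (h : Tendsto (fun y => (f y : ℝ) / y) atTop (𝓝 α)) :
    Tendsto (fun x => (f (x ⌈/⌉ c) : ℝ) / x) atTop (𝓝 (α / c)) := by
  rw [tendsto_iff_norm_sub_tendsto_zero]
  have hdev : Tendsto (fun x => |(f (x ⌈/⌉ c) : ℝ) / (x ⌈/⌉ c : ℕ) - α| / c + 1 / x)
      atTop (𝓝 0) := by
    have := ((tendsto_iff_norm_sub_tendsto_zero.1 h).comp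
      (Nat.tendsto_ceilDiv_atTop hc)).div_const (c : ℝ)
    simpa using this.add tendsto_one_div_atTop_nhds_zero_nat
  refine squeeze_zero' (Eventually.of_forall fun _ => norm_nonneg _) ?_ hdev
  filter_upwards [eventually_gt_atTop 0] with x hx
  exact abs_div_sub_le_of_ceilDiv hf hc hx α

lemma isBoundedUnder_abs_div_sub (hf : ∀ y, f y ≤ y) (α : ℝ) :
    IsBoundedUnder (· ≤ ·) atTop fun y => |(f y : ℝ) / y - α| := by
  refine isBoundedUnder_of ⟨1 + |α|, fun y => (abs_sub _ _).trans ?_⟩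
  have : (f y : ℝ) / y ≤ 1 := div_le_one_of_le₀ (by exact_mod_cast hf y) (by positivity)
  rw [abs_of_nonneg (by positivity)]
  linarith

end CeilDivCounting

section SumCeilDiv

variable {f g c : ℕ → ℕ} {S γ α : ℝ}

lemma sum_Ico_ceilDiv_div_le (hc : ∀ k, 0 < c k) (hS : HasSum (fun k => 1 / (c k : ℝ)) S)
    (hf : ∀ y, f y ≤ y - 1) {M x : ℕ} (hMx : M ≤ x) :
    ∑ k ∈ Ico M x, (f (x ⌈/⌉ c k) : ℝ) / x ≤ S - ∑ k ∈ range M, 1 / (c k : ℝ) := by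
  rcases x.eq_zero_or_pos with rfl | hx
  · simpa using sum_le_hasSum _ (fun _ _ => by positivity) hS
  calc ∑ k ∈ Ico M x, (f (x ⌈/⌉ c k) : ℝ) / x ≤ ∑ k ∈ Ico M x, 1 / (c k : ℝ) :=
        sum_le_sum fun k _ => by
          rw [div_le_iff₀ (by exact_mod_cast hx), one_div_mul_eq_div]
          exact cast_apply_ceilDiv_le_div hf x (hc k)
    _ = ∑ k ∈ range x, 1 / (c k : ℝ) - ∑ k ∈ range M, 1 / (c k : ℝ) := by
        rw [← sum_range_add_sum_Ico _ hMx]; ring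
    _ ≤ S - ∑ k ∈ range M, 1 / (c k : ℝ) := by
        gcongr; exact sum_le_hasSum _ (fun _ _ => by positivity) hS

lemma abs_div_sub_le_of_sum_ceilDiv (hc0 : c 0 = 1) (hc : ∀ k, 0 < c k)
    (hS : HasSum (fun k => 1 / (c k : ℝ)) S) (hf : ∀ y, f y ≤ y - 1)
    (hfg : ∀ x, g x = ∑ k ∈ range x, f (x ⌈/⌉ c k)) (hαS : α * S = γ) {M x : ℕ}
    (hM : 0 < M) (hMx : M ≤ x) :
    |(f x : ℝ) / x - α| ≤ |(g x : ℝ) / x - γ|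
      + ∑ k ∈ Ico 1 M, (|(f (x ⌈/⌉ c k) : ℝ) / (x ⌈/⌉ c k : ℕ) - α| / c k + 1 / x)
      + (1 + |α|) * (S - ∑ k ∈ range M, 1 / (c k : ℝ)) := by
  have hP : ∑ k ∈ range M, 1 / (c k : ℝ) = 1 + ∑ k ∈ Ico 1 M, 1 / (c k : ℝ) := by
    rw [sum_range_eq_add_Ico _ hM, hc0, Nat.cast_one, div_one]
  have htail := sum_Ico_ceilDiv_div_le hc hS hf hMx
  set P := ∑ k ∈ range M, 1 / (c k : ℝ)
  set tail := ∑ k ∈ Ico M x, (f (x ⌈/⌉ c k) : ℝ) / x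
  have hg : (g x : ℝ) / x = f x / x + ∑ k ∈ Ico 1 M, (f (x ⌈/⌉ c k) : ℝ) / x + tail := by
    rw [hfg, Nat.cast_sum, sum_div, ← sum_range_add_sum_Ico _ hMx, sum_range_eq_add_Ico _ hM,
      hc0, ceilDiv_one]
  -- `γ - α = α (S - 1)` is spread over the terms `k ≥ 1`
  have hid : (f x : ℝ) / x - α = ((g x : ℝ) / x - γ)
      - ∑ k ∈ Ico 1 M, ((f (x ⌈/⌉ c k) : ℝ) / x - α / c k) + α * (S - P) - tail := by
    rw [hg, ← hαS, hP, sum_sub_distrib]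
    simp_rw [div_eq_mul_one_div α]
    rw [← mul_sum]
    ring
  have hterms : |∑ k ∈ Ico 1 M, ((f (x ⌈/⌉ c k) : ℝ) / x - α / c k)|
      ≤ ∑ k ∈ Ico 1 M, (|(f (x ⌈/⌉ c k) : ℝ) / (x ⌈/⌉ c k : ℕ) - α| / c k + 1 / x) :=
    (abs_sum_le_sum_abs _ _).trans (sum_le_sum fun k _ => abs_div_sub_le_of_ceilDiv
      (fun y => (hf y).trans (Nat.sub_le y 1)) (hc k) (hM.trans_le hMx) α)
  have htail0 : 0 ≤ tail := by positivity
  have hαtail : |α * (S - P)| ≤ |α| * (S - P) := by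
    rw [abs_mul, abs_of_nonneg (htail0.trans htail)]
  rw [hid]
  calc _ ≤ |(g x : ℝ) / x - γ| + |∑ k ∈ Ico 1 M, ((f (x ⌈/⌉ c k) : ℝ) / x - α / c k)|
        + |α * (S - P)| + |tail| :=
        (abs_sub _ _).trans (by gcongr; exact (abs_add_le _ _).trans (by gcongr; exact abs_sub _ _))
    _ ≤ _ := by rw [abs_of_nonneg htail0]; linarith

lemma limsup_abs_div_sub_le_of_sum_ceilDiv (hc0 : c 0 = 1) (hc : ∀ k, 0 < c k)
    (hS : HasSum (fun k => 1 / (c k : ℝ)) S) (hf : ∀ y, f y ≤ y - 1)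
    (hfg : ∀ x, g x = ∑ k ∈ range x, f (x ⌈/⌉ c k))
    (hg : Tendsto (fun x => (g x : ℝ) / x) atTop (𝓝 γ)) (hαS : α * S = γ)
    {M : ℕ} (hM : 0 < M) {ε : ℝ} (hε : 0 < ε) :
    limsup (fun y => |(f y : ℝ) / y - α|) atTop
      ≤ (limsup (fun y => |(f y : ℝ) / y - α|) atTop + ε) * (S - 1) + 2 * ε
        + (1 + |α|) * (S - ∑ k ∈ range M, 1 / (c k : ℝ)) := by
  set v : ℕ → ℝ := fun y => |(f y : ℝ) / y - α|
  set D := limsup v atTop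
  have hbdd : IsBoundedUnder (· ≤ ·) atTop v :=
    isBoundedUnder_abs_div_sub (fun y => (hf y).trans (Nat.sub_le y 1)) α
  have hD0 : 0 ≤ D := le_limsup_of_le hbdd fun b hb => hb.exists.choose_spec.trans' (abs_nonneg _)
  refine limsup_le_of_le (isCoboundedUnder_le_of_le atTop fun y => abs_nonneg _) ?_
  have hg' : ∀ᶠ x in atTop, |(g x : ℝ) / x - γ| ≤ ε :=
    (Metric.tendsto_nhds.1 hg ε hε).mono fun x hx => hx.le
  have hv' : ∀ᶠ x in atTop, ∀ k ∈ Ico 1 M, v (x ⌈/⌉ c k) ≤ D + ε :=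
    (eventually_all_finset _).2 fun k _ => (Nat.tendsto_ceilDiv_atTop (hc k)).eventually
      ((eventually_lt_of_limsup_lt (lt_add_of_pos_right D hε) hbdd).mono fun _ h => h.le)
  have hM' : ∀ᶠ x : ℕ in atTop, (M : ℝ) / x ≤ ε :=
    ((tendsto_const_div_atTop_nhds_zero_nat (M : ℝ)).eventually (gt_mem_nhds hε)).mono
      fun _ h => h.le
  filter_upwards [hg', hv', hM', eventually_ge_atTop M] with x hgx hvx hMx hxM
  have hx : (0 : ℝ) < x := by exact_mod_cast hM.trans_le hxM
  have hP : ∑ k ∈ Ico 1 M, 1 / (c k : ℝ) ≤ S - 1 := by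
    have := sum_le_hasSum (range M) (fun _ _ => by positivity) hS
    rw [sum_range_eq_add_Ico _ hM, hc0, Nat.cast_one, div_one] at this
    linarith
  have hhead : ∑ k ∈ Ico 1 M, (v (x ⌈/⌉ c k) / c k + 1 / x) ≤ (D + ε) * (S - 1) + ε :=
    calc ∑ k ∈ Ico 1 M, (v (x ⌈/⌉ c k) / c k + 1 / x)
        ≤ ∑ k ∈ Ico 1 M, ((D + ε) * (1 / c k) + 1 / x) := sum_le_sum fun k hk => by
          rw [mul_one_div]; gcongr; exact hvx k hk
      _ = (D + ε) * ∑ k ∈ Ico 1 M, 1 / (c k : ℝ) + ((M - 1 : ℕ) : ℝ) / x := by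
          rw [sum_add_distrib, ← mul_sum, sum_const, Nat.card_Ico, nsmul_eq_mul, mul_one_div]
      _ ≤ (D + ε) * (S - 1) + ε := by
          gcongr
          exact (div_le_div_of_nonneg_right (by exact_mod_cast M.sub_le 1) hx.le).trans hMx
  linarith [abs_div_sub_le_of_sum_ceilDiv hc0 hc hS hf hfg hαS hM hxM]

theorem tendsto_div_of_sum_ceilDiv (hc0 : c 0 = 1) (hc : ∀ k, 0 < c k)
    (hS : HasSum (fun k => 1 / (c k : ℝ)) S) (hS2 : S < 2) (hf : ∀ y, f y ≤ y - 1)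
    (hfg : ∀ x, g x = ∑ k ∈ range x, f (x ⌈/⌉ c k))
    (hg : Tendsto (fun x => (g x : ℝ) / x) atTop (𝓝 γ)) :
    Tendsto (fun x => (f x : ℝ) / x) atTop (𝓝 (γ / S)) := by
  have hS1 : 1 ≤ S := by simpa [hc0] using le_hasSum hS 0 fun _ _ => by positivity
  have hαS : γ / S * S = γ := div_mul_cancel₀ γ (by positivity)
  set α := γ / S
  set D := limsup (fun y => |(f y : ℝ) / y - α|) atTop
  -- the estimate contracts `D` by the factor `S - 1 < 1`, so `D = 0`
  have hD : D ≤ 0 := by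
    suffices D * (2 - S) ≤ 0 by nlinarith
    refine le_of_forall_pos_le_add fun δ hδ => ?_
    have htail : Tendsto (fun M => (1 + |α|) * (S - ∑ k ∈ range M, 1 / (c k : ℝ)))
        atTop (𝓝 0) := by
      simpa using (hS.tendsto_sum_nat.const_sub S).const_mul (1 + |α|)
    obtain ⟨M, hM, hMδ⟩ := ((eventually_gt_atTop 0).and
      (htail.eventually_lt_const (half_pos hδ))).exists
    have hε : 0 < δ / (2 * (S + 1)) := by positivity
    have hδε : δ / (2 * (S + 1)) * (S - 1) + 2 * (δ / (2 * (S + 1))) = δ / 2 := by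
      field_simp
      ring
    nlinarith [limsup_abs_div_sub_le_of_sum_ceilDiv hc0 hc hS hf hfg hg hαS hM hε]
  refine Metric.tendsto_nhds.2 fun ε hε => ?_
  refine (eventually_lt_of_limsup_lt (hD.trans_lt hε) ?_).mono fun x hx => by rwa [Real.dist_eq]
  exact isBoundedUnder_abs_div_sub (fun y => (hf y).trans (Nat.sub_le y 1)) α

end SumCeilDiv

theorem Nat.eq_and_eq_of_sq_mul_eq_sq_mul {a b c d : ℕ} (ha : Squarefree a) (hc : Squarefree c)
    (hb : b ≠ 0) (h : b ^ 2 * a = d ^ 2 * c) : b = d ∧ a = c := by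
  have hd : d ≠ 0 := by
    rintro rfl
    simp [hb, ha.ne_zero] at h
  have hfac : ∀ p, 2 * b.factorization p + a.factorization p
      = 2 * d.factorization p + c.factorization p := fun p => by
    simpa [Nat.factorization_mul, hb, hd, ha.ne_zero, hc.ne_zero] using
      congrArg (·.factorization p) h
  have ha1 := (Nat.squarefree_iff_factorization_le_one ha.ne_zero).1 ha
  have hc1 := (Nat.squarefree_iff_factorization_le_one hc.ne_zero).1 hc
  -- parity of `2 β + α = 2 δ + γ` with `α, γ ≤ 1` forces `α = γ` and `β = δ`
  refine ⟨Nat.eq_of_factorization_eq hb hd fun p => ?_,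
    Nat.eq_of_factorization_eq ha.ne_zero hc.ne_zero fun p => ?_⟩ <;>
  · have := hfac p; have := ha1 p; have := hc1 p; omega

lemma Nat.sq_mul_mod_four_of_odd {d : ℕ} (hd : Odd d) (a : ℕ) : d ^ 2 * a % 4 = a % 4 := by
  obtain ⟨k, rfl⟩ := hd
  rw [show (2 * k + 1) ^ 2 * a = a + 4 * ((k ^ 2 + k) * a) by ring, Nat.add_mul_mod_self_left]

lemma Nat.sq_mul_mod_four_of_even {d : ℕ} (hd : Even d) (a : ℕ) : d ^ 2 * a % 4 = 0 := by
  obtain ⟨k, rfl⟩ := hd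
  rw [show (k + k) ^ 2 * a = 4 * (k ^ 2 * a) by ring, Nat.mul_mod_right]

def threeModFour : Set ℕ := {n | 0 < n ∧ n % 4 = 3}

def sqfreeThreeModFour : Set ℕ := {n ∈ threeModFour | Squarefree n}

lemma threeModFour_eq_iUnion :
    threeModFour = ⋃ k : ℕ, ((2 * k + 1) ^ 2 * ·) '' sqfreeThreeModFour := by
  ext m
  simp only [Set.mem_iUnion, Set.mem_image]
  constructor
  · rintro ⟨hm, hm3⟩
    obtain ⟨a, d, ha, -, rfl, hsq⟩ := Nat.sq_mul_squarefree_of_pos hm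
    obtain ⟨k, rfl⟩ : Odd d := by
      refine Nat.not_even_iff_odd.1 fun he => ?_
      rw [Nat.sq_mul_mod_four_of_even he] at hm3
      omega
    rw [Nat.sq_mul_mod_four_of_odd (odd_two_mul_add_one k)] at hm3
    exact ⟨k, a, ⟨⟨ha, hm3⟩, hsq⟩, rfl⟩
  · rintro ⟨k, a, ⟨⟨ha, ha3⟩, -⟩, rfl⟩
    exact ⟨by positivity, by rw [Nat.sq_mul_mod_four_of_odd (odd_two_mul_add_one k), ha3]⟩

lemma pairwise_disjoint_odd_sq_mul_sqfreeThreeModFour :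
    Pairwise (Disjoint on (fun k : ℕ => ((2 * k + 1) ^ 2 * ·) '' sqfreeThreeModFour)) := by
  intro i j hij
  rw [Function.onFun, Set.disjoint_left]
  rintro _ ⟨a, ha, rfl⟩ ⟨b, hb, hba⟩
  have := (Nat.eq_and_eq_of_sq_mul_eq_sq_mul hb.2 ha.2 (by positivity) hba).1
  omega

lemma cnt_biUnion_odd_sq_mul (N x : ℕ) :
    cnt (⋃ k ∈ range N, ((2 * k + 1) ^ 2 * ·) '' sqfreeThreeModFour) x
      = ∑ k ∈ range N, cnt sqfreeThreeModFour (x ⌈/⌉ (2 * k + 1) ^ 2) := by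
  rw [cnt_biUnion _ (pairwise_disjoint_odd_sq_mul_sqfreeThreeModFour.set_pairwise _)]
  exact sum_congr rfl fun k _ => cnt_image_mul _ (by positivity) x

lemma cnt_threeModFour_eq_sum (x : ℕ) :
    cnt threeModFour x = ∑ k ∈ range x, cnt sqfreeThreeModFour (x ⌈/⌉ (2 * k + 1) ^ 2) := by
  rw [← cnt_biUnion_odd_sq_mul, cnt, cnt, threeModFour_eq_iUnion]
  congr 1
  ext m
  simp only [Set.mem_inter_iff, Set.mem_iUnion, Set.mem_image, Set.mem_Iio, mem_range,
    exists_prop]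
  refine ⟨fun ⟨⟨k, a, ha, hm⟩, hmx⟩ => ⟨⟨k, ?_, a, ha, hm⟩, hmx⟩,
    fun ⟨⟨k, _, hk⟩, hmx⟩ => ⟨⟨k, hk⟩, hmx⟩⟩
  have : 1 ≤ a := ha.1.1
  nlinarith

lemma cnt_threeModFour (x : ℕ) : cnt threeModFour x = x / 4 := by
  have hset : threeModFour = {n | n ≡ 3 [MOD 4]} := by
    ext n
    show 0 < n ∧ n % 4 = 3 ↔ n % 4 = 3 % 4
    omega
  rw [hset, cnt_eq_card_filter, ← Nat.count_eq_card_filter_range]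
  have := Nat.count_modEq_card x four_pos 3
  rw [if_neg (by omega), add_zero] at this
  exact this

lemma tendsto_cnt_threeModFour_div :
    Tendsto (fun x : ℕ => (cnt threeModFour x : ℝ) / x) atTop (𝓝 (1 / 4)) := by
  refine ((tendsto_nat_floor_mul_div_atTop (a := (1 / 4 : ℝ)) (by norm_num)).comp
    tendsto_natCast_atTop_atTop).congr fun x => ?_
  rw [Function.comp_apply, cnt_threeModFour,
    show (1 / 4 : ℝ) * x = (x : ℝ) / (4 : ℕ) by push_cast; ring, Nat.floor_div_eq_div]

theorem hasSum_one_div_odd_sq :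
    HasSum (fun k : ℕ => 1 / (2 * (k : ℝ) + 1) ^ 2) (π ^ 2 / 8) := by
  set f : ℕ → ℝ := fun n => 1 / (n : ℝ) ^ 2
  have hinj : Injective fun k : ℕ => 2 * k + 1 := fun i j h => by simp only at h; omega
  obtain ⟨t, hodd⟩ := hasSum_zeta_two.summable.comp_injective hinj
  have heven : HasSum (fun k => f (2 * k)) (π ^ 2 / 6 / 4) :=
    (hasSum_zeta_two.div_const 4).congr_fun fun k => by simp only [f]; push_cast; ring
  have ht : t = π ^ 2 / 8 := by
    linarith [hasSum_zeta_two.unique (heven.even_add_odd hodd)]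
  exact ht ▸ hodd.congr_fun fun k => by simp

theorem tendsto_cnt_sqfreeThreeModFour_div :
    Tendsto (fun x => (cnt sqfreeThreeModFour x : ℝ) / x) atTop (𝓝 (2 / π ^ 2)) := by
  have hS : HasSum (fun k => 1 / (((2 * k + 1) ^ 2 : ℕ) : ℝ)) (π ^ 2 / 8) := by
    simpa using hasSum_one_div_odd_sq
  have hS2 : π ^ 2 / 8 < 2 := by nlinarith [pi_lt_d2, pi_pos]
  have h := tendsto_div_of_sum_ceilDiv (c := fun k => (2 * k + 1) ^ 2) (by norm_num)
    (fun k => by positivity) hS hS2 (cnt_le_sub_one fun h => h.1.1.false)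
    cnt_threeModFour_eq_sum tendsto_cnt_threeModFour_div
  convert h using 2
  field_simp
  ring

lemma relDensity_biUnion_odd_sq_mul (N : ℕ) :
    relDensity (⋃ k ∈ range N, ((2 * k + 1) ^ 2 * ·) '' sqfreeThreeModFour) threeModFour
      (8 / π ^ 2 * ∑ k ∈ range N, 1 / (2 * (k : ℝ) + 1) ^ 2) := by
  have hnum : Tendsto (fun x : ℕ => (∑ k ∈ range N,
      cnt sqfreeThreeModFour (x ⌈/⌉ (2 * k + 1) ^ 2) : ℝ) / x) atTop
      (𝓝 (∑ k ∈ range N, 2 / π ^ 2 / (((2 * k + 1) ^ 2 : ℕ) : ℝ))) := by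
    simp_rw [sum_div]
    exact tendsto_finsetSum _ fun k _ => tendsto_comp_ceilDiv_div
      (fun y => (cnt_le_sub_one (fun h => h.1.1.false) y).trans (Nat.sub_le y 1))
      (by positivity) tendsto_cnt_sqfreeThreeModFour_div
  have hlim := hnum.div tendsto_cnt_threeModFour_div (by norm_num)
  rw [show (∑ k ∈ range N, 2 / π ^ 2 / (((2 * k + 1) ^ 2 : ℕ) : ℝ)) / (1 / 4)
      = 8 / π ^ 2 * ∑ k ∈ range N, 1 / (2 * (k : ℝ) + 1) ^ 2 by
    rw [mul_sum, sum_div]; push_cast; ring_nf] at hlim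
  refine hlim.congr' ((eventually_ne_atTop 0).mono fun x hx => ?_)
  simp only [Pi.div_apply, cnt_biUnion_odd_sq_mul, Nat.cast_sum]
  exact div_div_div_cancel_right₀ (Nat.cast_ne_zero.2 hx) _ _

lemma biUnion_Icc_eq_biUnion_range (S : Set ℕ) (N : ℕ) :
    ⋃ n ∈ Icc 1 N, (fun a => (2 * n - 1) ^ 2 * a) '' S
      = ⋃ k ∈ range N, (fun a => (2 * k + 1) ^ 2 * a) '' S := by
  ext m
  simp only [Set.mem_iUnion, mem_Icc, mem_range, exists_prop]
  constructor
  · rintro ⟨n, ⟨hn1, hnN⟩, hm⟩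
    exact ⟨n - 1, by omega, by rwa [show 2 * (n - 1) + 1 = 2 * n - 1 by omega]⟩
  · rintro ⟨k, hk, hm⟩
    exact ⟨k + 1, ⟨by omega, by omega⟩, by rwa [show 2 * (k + 1) - 1 = 2 * k + 1 by omega]⟩

lemma sum_Icc_one_div_odd_sq (N : ℕ) :
    ∑ n ∈ Icc 1 N, 1 / (2 * (n : ℝ) - 1) ^ 2 = ∑ k ∈ range N, 1 / (2 * (k : ℝ) + 1) ^ 2 := by
  rw [← Ico_add_one_right_eq_Icc, sum_Ico_eq_sum_range, Nat.add_sub_cancel]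
  push_cast
  ring_nf

theorem stmt_10
    (B : Set ℕ) (hB : B = {n : ℕ | 0 < n ∧ n % 4 = 3})
    (A : Set ℕ) (hA : A = {n ∈ B | Squarefree n})
    (AN : ℕ → Set ℕ)
    (hAN : ∀ N, AN N = ⋃ n ∈ Finset.Icc 1 N, (fun a => (2 * n - 1) ^ 2 * a) '' A) :
    (∀ N, 1 ≤ N → relDensity (AN N) B
      ((8 / π ^ 2) * ∑ n ∈ Finset.Icc 1 N, 1 / ((2 * (n : ℝ) - 1) ^ 2))) ∧
    Tendsto (fun N : ℕ => (8 / π ^ 2) * ∑ n ∈ Finset.Icc 1 N, 1 / ((2 * (n : ℝ) - 1) ^ 2))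
      atTop (nhds 1) := by
  obtain rfl : B = threeModFour := hB
  obtain rfl : A = sqfreeThreeModFour := hA
  simp_rw [sum_Icc_one_div_odd_sq]
  refine ⟨fun N _ => ?_, ?_⟩
  · rw [hAN, biUnion_Icc_eq_biUnion_range]
    exact relDensity_biUnion_odd_sq_mul N
  · convert hasSum_one_div_odd_sq.tendsto_sum_nat.const_mul (8 / π ^ 2) using 2
    field_simp
end

section
/- Let A be the set of positive integers ≡ 3 mod 4, B the set of positive integers ≡ 1 mod 4, and p₁, p₂, … the primes ≡ 3 mod 4 in increasing order. Let C_N = B \ ⋃_{i=1}^N p_i·A. Then the natural density of C_N in B tends to 0 as N → ∞. -/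
/-!
Membership in `C_N` only depends on `n` modulo `M = 4 p₁⋯p_N`: for `n ≡ 1 mod 4`, being in
`p · A` just means `p ∣ n`, so `C_N` is the set of `n ≡ 1 mod 4` coprime to `Q = p₁⋯p_N`.
Periodic sets have a natural density, read off from one period, and reduction modulo `Q` embeds
one period of `C_N` into the units mod `Q`, so the density of `C_N` in `B` is at most
`φ(Q)/Q = ∏ (1 - 1/pᵢ) ≤ exp (-∑ 1/pᵢ)`. The exponent tends to `-∞` because, by the analytic
input of Dirichlet's theorem, the reciprocals of the primes `≡ 3 mod 4` are not summable.
-/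

open Filter

open Function Topology
open scoped Nat

section Counting

open scoped Classical in
lemma cnt_eq_count (S : Set ℕ) (x : ℕ) : cnt S x = Nat.count (· ∈ S) x := by
  rw [cnt, Nat.count_eq_card_filter_range, ← Set.ncard_coe_finset]
  congr 1
  ext n
  simp [and_comm]

lemma cnt_le (S : Set ℕ) (x : ℕ) : cnt S x ≤ x := by
  classical
  rw [cnt_eq_count]
  exact Nat.count_le _

variable {S : Set ℕ} {M : ℕ}

lemma cnt_add_of_periodic (hS : Periodic (· ∈ S) M) (x : ℕ) :
    cnt S (x + M) = cnt S x + cnt S M := by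
  classical
  simp only [cnt_eq_count, Nat.count_add', show (fun k => k + M ∈ S) = (· ∈ S) from funext hS]

lemma cnt_add_mul_of_periodic (hS : Periodic (· ∈ S) M) (x k : ℕ) :
    cnt S (x + k * M) = cnt S x + k * cnt S M := by
  induction k with
  | zero => simp
  | succ k ih => rw [add_mul, one_mul, ← add_assoc, cnt_add_of_periodic hS, ih]; ring

lemma abs_cnt_mul_sub_le_of_periodic (hM : 0 < M) (hS : Periodic (· ∈ S) M) (x : ℕ) :
    |(cnt S x * M : ℝ) - x * cnt S M| ≤ M * M := by
  have hcnt : cnt S x = cnt S (x % M) + x / M * cnt S M := by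
    rw [← cnt_add_mul_of_periodic hS, Nat.mod_add_div']
  have hx : (x : ℝ) = (x % M : ℕ) + (x / M : ℕ) * M := by
    exact_mod_cast (Nat.mod_add_div' x M).symm
  have hdiff : (cnt S x * M : ℝ) - x * cnt S M = cnt S (x % M) * M - (x % M : ℕ) * cnt S M := by
    rw [hcnt, hx]
    push_cast
    ring
  have hr : x % M ≤ M := (Nat.mod_lt _ hM).le
  have hrR : ((x % M : ℕ) : ℝ) ≤ M := mod_cast hr
  have hcr : (cnt S (x % M) : ℝ) ≤ M := mod_cast (cnt_le S _).trans hr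
  have hc : (cnt S M : ℝ) ≤ M := mod_cast cnt_le S M
  rw [hdiff]
  apply abs_sub_le_of_nonneg_of_le <;> first | positivity | gcongr

lemma tendsto_cnt_div_of_periodic (hM : 0 < M) (hS : Periodic (· ∈ S) M) :
    Tendsto (fun x : ℕ => (cnt S x : ℝ) / x) atTop (𝓝 ((cnt S M : ℝ) / M)) := by
  have hMR : (0 : ℝ) < M := mod_cast hM
  rw [← tendsto_sub_nhds_zero_iff]
  refine squeeze_zero_norm' ?_ (tendsto_const_div_atTop_nhds_zero_nat (M : ℝ))
  filter_upwards [eventually_gt_atTop 0] with x hx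
  have hxR : (0 : ℝ) < x := mod_cast hx
  rw [div_sub_div _ _ hxR.ne' hMR.ne', norm_div, Real.norm_eq_abs, Real.norm_eq_abs,
    abs_of_pos (mul_pos hxR hMR), div_le_div_iff₀ (mul_pos hxR hMR) hxR]
  calc |(cnt S x * M : ℝ) - x * cnt S M| * x ≤ M * M * x := by
        gcongr
        exact abs_cnt_mul_sub_le_of_periodic hM hS x
    _ = M * (x * M) := by ring

lemma relDensity_of_periodic {T : Set ℕ} (hM : 0 < M) (hS : Periodic (· ∈ S) M)
    (hT : Periodic (· ∈ T) M) (hTM : cnt T M ≠ 0) :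
    relDensity S T ((cnt S M : ℝ) / cnt T M) := by
  have hMR : (M : ℝ) ≠ 0 := mod_cast hM.ne'
  have hlim := (tendsto_cnt_div_of_periodic hM hS).div (tendsto_cnt_div_of_periodic hM hT)
    (div_ne_zero (mod_cast hTM) hMR)
  rw [div_div_div_cancel_right₀ hMR] at hlim
  refine hlim.congr' ?_
  filter_upwards [eventually_gt_atTop 0] with x hx
  exact div_div_div_cancel_right₀ (mod_cast hx.ne') _ _

end Counting

lemma cnt_modEq_coprime_le_totient {m Q : ℕ} (hmQ : m.Coprime Q) (a : ℕ) :
    cnt {n | n ≡ a [MOD m] ∧ n.Coprime Q} (m * Q) ≤ φ Q := by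
  rw [cnt, Nat.totient, ← Set.ncard_coe_finset]
  refine Set.ncard_le_ncard_of_injOn (· % Q) ?_ ?_ (Finset.finite_toSet _)
  · rintro n ⟨⟨-, hn⟩, hnQ⟩
    have hQ : 0 < Q := Nat.pos_of_mul_pos_left (Nat.zero_lt_of_lt hnQ)
    simp only [Finset.coe_filter, Finset.mem_range, Set.mem_ofPred_eq]
    exact ⟨Nat.mod_lt n hQ, ((ZMod.coprime_mod_iff_coprime n Q).mpr hn).symm⟩
  · rintro n ⟨⟨hn, -⟩, hnQ⟩ n' ⟨⟨hn', -⟩, hn'Q⟩ h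
    exact ((Nat.modEq_and_modEq_iff_modEq_mul hmQ).mp ⟨hn.trans hn'.symm, h⟩).eq_of_lt_of_lt
      hnQ hn'Q

lemma totient_prod_div_prod_le_exp {ι : Type*} {t : Finset ι} {p : ι → ℕ}
    (hp : ∀ i ∈ t, (p i).Prime) (hinj : Set.InjOn p t) :
    (φ (∏ i ∈ t, p i) : ℝ) / ∏ i ∈ t, (p i : ℝ) ≤ Real.exp (-∑ i ∈ t, (p i : ℝ)⁻¹) := by
  have h := Nat.totient_eq_mul_prod_factors (∏ q ∈ t.image p, q)
  rw [Nat.primeFactors_prod (by simpa using hp), Finset.prod_image hinj,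
    Finset.prod_image hinj] at h
  have hR : (φ (∏ i ∈ t, p i) : ℝ) = (∏ i ∈ t, (p i : ℝ)) * ∏ i ∈ t, (1 - (p i : ℝ)⁻¹) := by
    have hcast := congrArg (Rat.cast : ℚ → ℝ) h
    push_cast at hcast
    exact hcast
  have hpos : (0 : ℝ) < ∏ i ∈ t, (p i : ℝ) :=
    Finset.prod_pos fun i hi => mod_cast (hp i hi).pos
  rw [hR, mul_div_cancel_left₀ _ hpos.ne', ← Finset.sum_neg_distrib, Real.exp_sum]
  refine Finset.prod_le_prod (fun i hi => ?_) fun i _ => Real.one_sub_le_exp_neg _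
  have : (1 : ℝ) ≤ p i := mod_cast (hp i hi).one_lt.le
  exact sub_nonneg.mpr (inv_le_one_of_one_le₀ this)

section Dirichlet

open ArithmeticFunction vonMangoldt

lemma mul_log_div_rpow_le_inv (n : ℕ) {ε : ℝ} (hε : 0 < ε) :
    ε * (Real.log n / (n : ℝ) ^ (1 + ε)) ≤ (n : ℝ)⁻¹ := by
  rcases Nat.eq_zero_or_pos n with rfl | hn
  · simp
  have hnR : (0 : ℝ) < n := mod_cast hn
  have hlog : ε * Real.log n ≤ (n : ℝ) ^ ε := by
    have := Real.log_le_rpow_div hnR.le hε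
    rwa [le_div_iff₀' hε] at this
  rw [Real.rpow_add hnR, Real.rpow_one, ← mul_div_assoc, div_le_iff₀ (by positivity),
    inv_mul_eq_div, mul_div_cancel_left₀ _ hnR.ne']
  exact hlog

variable {q : ℕ} {a : ZMod q}

lemma tendsto_sub_one_mul_residueClass_div_rpow (n : ℕ) :
    Tendsto (fun x : ℝ => (x - 1) * (residueClass a n / (n : ℝ) ^ x)) (𝓝[>] 1) (𝓝 0) := by
  rcases eq_or_ne n 0 with rfl | hn
  · simp
  apply tendsto_nhdsWithin_of_tendsto_nhds
  have : ContinuousAt (fun x : ℝ => (x - 1) * (residueClass a n / (n : ℝ) ^ x)) 1 := by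
    have := Real.continuousAt_const_rpow (b := 1) (Nat.cast_ne_zero.mpr hn)
    fun_prop (disch := positivity)
  simpa using this.tendsto

lemma sub_one_mul_residueClass_div_rpow_le {x : ℝ} (hx : x ∈ Set.Ioc 1 2) (n : ℕ) :
    (x - 1) * (residueClass a n / (n : ℝ) ^ x) ≤
      (if n.Prime ∧ (n : ZMod q) = a then (n : ℝ)⁻¹ else 0) +
        (if n.Prime then 0 else residueClass a n) / n := by
  by_cases hp : n.Prime
  · by_cases hna : (n : ZMod q) = a
    · simpa [hp, hna, vonMangoldt_apply_prime hp] using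
        mul_log_div_rpow_le_inv n (sub_pos.mpr hx.1)
    · simp [hp, hna, residueClass]
  rcases Nat.eq_zero_or_pos n with rfl | hn
  · simp
  have hn1 : (1 : ℝ) ≤ n := mod_cast hn
  have hR := residueClass_nonneg a n
  simp only [hp, false_and, if_false, zero_add]
  calc (x - 1) * (residueClass a n / (n : ℝ) ^ x) ≤ 1 * (residueClass a n / n) :=
        mul_le_mul (by linarith [hx.2]) (div_le_div_of_nonneg_left hR (by positivity)
          (Real.self_le_rpow_of_one_le hn1 hx.1.le)) (by positivity) zero_le_one
    _ = residueClass a n / n := one_mul _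

/-- If the sum converged, dominated convergence would send `(x - 1) ∑ Λₐ(n) / n ^ x` to `0` as
`x → 1⁺`, while the pole of the `L`-series keeps it above `φ(q)⁻¹ - O(x - 1)`. -/
lemma not_summable_inv_prime_residueClass [NeZero q] (ha : IsUnit a) :
    ¬ Summable fun n : ℕ => if n.Prime ∧ (n : ZMod q) = a then (n : ℝ)⁻¹ else 0 := by
  intro hsum
  set f : ℝ → ℕ → ℝ := fun x n => (x - 1) * (residueClass a n / (n : ℝ) ^ x)
  have hIoc : ∀ᶠ x in 𝓝[>] (1 : ℝ), x ∈ Set.Ioc 1 2 := Ioc_mem_nhdsGT one_lt_two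
  have hf_le : ∀ x ∈ Set.Ioc (1 : ℝ) 2, ∀ n, ‖f x n‖ ≤
      (if n.Prime ∧ (n : ZMod q) = a then (n : ℝ)⁻¹ else 0) +
        (if n.Prime then 0 else residueClass a n) / n := fun x hx n => by
    rw [Real.norm_of_nonneg (mul_nonneg (sub_nonneg.mpr hx.1.le)
      (div_nonneg (residueClass_nonneg a n) (by positivity)))]
    exact sub_one_mul_residueClass_div_rpow_le hx n
  have hf_sum_tendsto : Tendsto (fun x => ∑' n, f x n) (𝓝[>] 1) (𝓝 0) := by
    simpa using tendsto_tsum_of_dominated_convergence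
      (hsum.add (summable_residueClass_non_primes_div a))
      tendsto_sub_one_mul_residueClass_div_rpow (hIoc.mono hf_le)
  obtain ⟨C, hC⟩ := LSeries_residueClass_lower_bound ha
  have hf_sum_ge : ∀ x ∈ Set.Ioc (1 : ℝ) 2, (φ q : ℝ)⁻¹ - (x - 1) * C ≤ ∑' n, f x n := by
    intro x hx
    have hx1 : 0 < x - 1 := sub_pos.mpr hx.1
    have := mul_le_mul_of_nonneg_left (hC hx) hx1.le
    rw [mul_sub, mul_div_cancel₀ _ hx1.ne'] at this
    rw [tsum_mul_left]
    linarith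
  have hlim : Tendsto (fun x : ℝ => (φ q : ℝ)⁻¹ - (x - 1) * C) (𝓝[>] 1) (𝓝 (φ q : ℝ)⁻¹) := by
    apply tendsto_nhdsWithin_of_tendsto_nhds
    have : Continuous fun x : ℝ => (φ q : ℝ)⁻¹ - (x - 1) * C := by fun_prop
    simpa using this.tendsto 1
  have hφ : (φ q : ℝ)⁻¹ ≤ 0 := le_of_tendsto_of_tendsto hlim hf_sum_tendsto (hIoc.mono hf_sum_ge)
  exact (inv_pos.mpr (mod_cast Nat.totient_pos.mpr (NeZero.pos q))).not_ge hφ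

end Dirichlet

lemma periodic_mem_modEq_coprime (m Q a : ℕ) :
    Periodic (· ∈ {n | n ≡ a [MOD m] ∧ n.Coprime Q}) (m * Q) := fun n => by
  simp only [Set.mem_ofPred_eq, Nat.ModEq, Nat.add_mul_mod_self_left,
    Nat.coprime_add_mul_right_left]

lemma mem_image_mul_iff_dvd_of_mod_four {q n : ℕ} (hq : q % 4 = 3) (hn : n % 4 = 1) :
    n ∈ (fun a => q * a) '' {m : ℕ | 0 < m ∧ m % 4 = 3} ↔ q ∣ n := by
  constructor
  · rintro ⟨m, -, rfl⟩
    exact dvd_mul_right q m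
  · rintro ⟨m, rfl⟩
    have hmod := Nat.mul_mod q m 4
    rw [hq, hn] at hmod
    refine ⟨m, ⟨Nat.pos_of_ne_zero ?_, by omega⟩, rfl⟩
    rintro rfl
    simp at hn

lemma sdiff_iUnion_image_mul_eq_coprime {ι : Type*} (t : Finset ι) (p : ι → ℕ)
    (hp : ∀ i ∈ t, (p i).Prime ∧ p i % 4 = 3) :
    {n : ℕ | 0 < n ∧ n % 4 = 1} \ ⋃ i ∈ t, (fun a => p i * a) '' {m : ℕ | 0 < m ∧ m % 4 = 3} =
      {n | n ≡ 1 [MOD 4] ∧ n.Coprime (∏ i ∈ t, p i)} := by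
  ext n
  simp only [Set.mem_sdiff, Set.mem_ofPred_eq, Set.mem_iUnion, Nat.ModEq,
    Nat.coprime_prod_right_iff, not_exists]
  refine ⟨fun ⟨⟨_, hn⟩, h⟩ => ⟨hn, fun i hi => ?_⟩, fun ⟨hn, h⟩ => ⟨⟨?_, hn⟩, fun i hi => ?_⟩⟩
  · rw [Nat.coprime_comm, (hp i hi).1.coprime_iff_not_dvd,
      ← mem_image_mul_iff_dvd_of_mod_four (hp i hi).2 hn]
    exact h i hi
  · omega
  · rw [mem_image_mul_iff_dvd_of_mod_four (hp i hi).2 hn, ← (hp i hi).1.coprime_iff_not_dvd,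
      Nat.coprime_comm]
    exact h i hi

lemma coprime_four_of_mod_four_eq_three {n : ℕ} (hn : n % 4 = 3) : Nat.Coprime 4 n := by
  rw [Nat.Coprime, Nat.gcd_rec, hn]
  rfl

lemma tendsto_sum_inv_of_range_eq_primes_mod_four (p : ℕ → ℕ) (hinj : Injective p)
    (hp : ∀ i, (p i).Prime ∧ p i % 4 = 3)
    (hpall : ∀ q : ℕ, q.Prime → q % 4 = 3 → ∃ i, p i = q) :
    Tendsto (fun N => ∑ i ∈ Finset.range N, (p i : ℝ)⁻¹) atTop atTop := by
  have hmod (n : ℕ) : (n : ZMod 4) = 3 ↔ n % 4 = 3 := by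
    rw [show (3 : ZMod 4) = ((3 : ℕ) : ZMod 4) from rfl, ZMod.natCast_eq_natCast_iff']
  set f : ℕ → ℝ := fun n => if n.Prime ∧ (n : ZMod 4) = 3 then (n : ℝ)⁻¹ else 0
  have hf : f ∘ p = fun i => (p i : ℝ)⁻¹ := funext fun i => by simp [f, hmod, hp i]
  have hsupp : ∀ n ∉ Set.range p, f n = 0 := by
    intro n hn
    simp only [f, hmod, ite_eq_right_iff, and_imp]
    exact fun hprime h3 => absurd (hpall n hprime h3) hn
  have hns : ¬ Summable fun i => (p i : ℝ)⁻¹ := by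
    rw [← hf, hinj.summable_iff hsupp]
    exact not_summable_inv_prime_residueClass (by decide)
  exact (not_summable_iff_tendsto_nat_atTop_of_nonneg fun i => by positivity).mp hns

lemma periodic_mem_mod_four_eq_one (k : ℕ) :
    Periodic (· ∈ {n : ℕ | 0 < n ∧ n % 4 = 1}) (4 * k) := by
  have h4 : Periodic (· ∈ {n : ℕ | 0 < n ∧ n % 4 = 1}) 4 := fun n => by
    simp only [Set.mem_ofPred_eq]
    exact propext (by omega)
  rw [mul_comm]
  exact h4.nat_mul k

lemma cnt_mod_four_eq_one_four_mul (k : ℕ) : cnt {n : ℕ | 0 < n ∧ n % 4 = 1} (4 * k) = k := by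
  have h4 : {n : ℕ | 0 < n ∧ n % 4 = 1} ∩ Set.Iio 4 = {1} := by
    ext n
    simp only [Set.mem_inter_iff, Set.mem_ofPred_eq, Set.mem_Iio, Set.mem_singleton_iff]
    omega
  have hper : Periodic (· ∈ {n : ℕ | 0 < n ∧ n % 4 = 1}) 4 := by
    simpa only [mul_one] using periodic_mem_mod_four_eq_one 1
  rw [mul_comm, ← zero_add (k * 4), cnt_add_mul_of_periodic hper, cnt, cnt, h4,
    Set.ncard_singleton]
  simp

theorem stmt_12
    (A B : Set ℕ) (hA : A = {n : ℕ | 0 < n ∧ n % 4 = 3}) (hB : B = {n : ℕ | 0 < n ∧ n % 4 = 1})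
    (p : ℕ → ℕ) (hpmono : StrictMono p)
    (hp : ∀ i, (p i).Prime ∧ p i % 4 = 3)
    (hpall : ∀ q : ℕ, q.Prime → q % 4 = 3 → ∃ i, p i = q)
    (C : ℕ → Set ℕ)
    (hC : ∀ N, C N = B \ ⋃ i ∈ Finset.range N, (fun a => p i * a) '' A) :
    ∃ α : ℕ → ℝ, (∀ N, relDensity (C N) B (α N)) ∧ Tendsto α atTop (nhds 0) := by
  subst hA hB
  set Q : ℕ → ℕ := fun N => ∏ i ∈ Finset.range N, p i
  have hQ (N : ℕ) : 0 < Q N := Finset.prod_pos fun i _ => (hp i).1.pos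
  have hCQ (N : ℕ) : C N = {n | n ≡ 1 [MOD 4] ∧ n.Coprime (Q N)} :=
    (hC N).trans (sdiff_iUnion_image_mul_eq_coprime _ p fun i _ => hp i)
  refine ⟨fun N => (cnt (C N) (4 * Q N) : ℝ) / Q N, fun N => ?_, ?_⟩
  · have := relDensity_of_periodic (Nat.mul_pos four_pos (hQ N))
      (hCQ N ▸ periodic_mem_modEq_coprime 4 (Q N) 1) (periodic_mem_mod_four_eq_one (Q N))
      (by rw [cnt_mod_four_eq_one_four_mul]; exact (hQ N).ne')
    rwa [cnt_mod_four_eq_one_four_mul] at this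
  have hsum := tendsto_sum_inv_of_range_eq_primes_mod_four p hpmono.injective hp hpall
  refine squeeze_zero (fun N => by positivity) (fun N => ?_)
    (Real.tendsto_exp_atBot.comp (tendsto_neg_atTop_atBot.comp hsum))
  have hcop : Nat.Coprime 4 (Q N) :=
    Nat.Coprime.prod_right fun i _ => coprime_four_of_mod_four_eq_three (hp i).2
  calc (cnt (C N) (4 * Q N) : ℝ) / Q N ≤ φ (Q N) / ∏ i ∈ Finset.range N, (p i : ℝ) := by
        rw [hCQ, Nat.cast_prod]
        gcongr
        exact cnt_modEq_coprime_le_totient hcop 1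
    _ ≤ Real.exp (-∑ i ∈ Finset.range N, (p i : ℝ)⁻¹) :=
        totient_prod_div_prod_le_exp (fun i _ => (hp i).1) hpmono.injective.injOn
end

section
/- The product ∏_{i=1}^N (1 − 1/p_i), taken over the first N primes p_i congruent to 3 mod 4, tends to 0 as N → ∞. -/
/-!
Since `1 - t ≤ exp (-t)`, the partial products are at most `exp (-∑ 1 / pᵢ)`, so it suffices that
`∑ 1 / p` over primes `p ≡ 3 mod 4` diverges. If it converged, choose `N` with the tail beyond `N`
below `1 / (2 φ(4))`. For `x > 1`, `log p / p ^ x ≤ (x - 1)⁻¹ / p`, so the part of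
`∑ Λ(n) / n ^ x` over `n ≡ 3` coming from primes beyond `N` is at most `(2 φ(4) (x - 1))⁻¹`, and the
remaining terms stay bounded. This contradicts the pole of residue `1 / φ(4)` of that series at
`x = 1`, the analytic input of Dirichlet's theorem.
-/

open Filter Topology

lemma Real.log_div_rpow_le {x y : ℝ} (hx : 1 < x) (hy : 0 < y) :
    Real.log y / y ^ x ≤ (x - 1)⁻¹ * y⁻¹ := by
  have hpow : y ^ x = y ^ (x - 1) * y := by
    rw [← Real.rpow_add_one hy.ne']; ring_nf
  rw [div_le_iff₀ (by positivity), hpow]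
  calc Real.log y ≤ y ^ (x - 1) / (x - 1) := Real.log_le_rpow_div hy.le (by linarith)
    _ = (x - 1)⁻¹ * y⁻¹ * (y ^ (x - 1) * y) := by field_simp

namespace ArithmeticFunction.vonMangoldt

variable {q : ℕ} {a : ZMod q}

lemma residueClass_div_rpow_le_div {x : ℝ} (hx : 1 ≤ x) (n : ℕ) :
    residueClass a n / (n : ℝ) ^ x ≤ residueClass a n / n := by
  rcases n.eq_zero_or_pos with rfl | hn
  · simp
  · refine div_le_div_of_nonneg_left (residueClass_nonneg a n) (mod_cast hn) ?_
    conv_lhs => rw [← Real.rpow_one n]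
    exact Real.rpow_le_rpow_of_exponent_le (mod_cast hn) hx

lemma residueClass_div_rpow_le (N : ℕ) {x : ℝ} (hx : 1 < x) (n : ℕ) :
    residueClass a n / (n : ℝ) ^ x ≤ (if n.Prime then 0 else residueClass a n) / n +
      if n < N then residueClass a n / n
      else (x - 1)⁻¹ * {p : ℕ | p.Prime ∧ (p : ZMod q) = a}.indicator (fun n => (n : ℝ)⁻¹) n := by
  have hle := residueClass_div_rpow_le_div (a := a) hx.le n
  have hr := residueClass_nonneg a n
  have hx₀ : 0 ≤ (x - 1)⁻¹ := inv_nonneg.mpr (sub_nonneg.mpr hx.le)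
  have hg : 0 ≤ {p : ℕ | p.Prime ∧ (p : ZMod q) = a}.indicator (fun n => (n : ℝ)⁻¹) n :=
    Set.indicator_nonneg (fun m _ => inv_nonneg.mpr m.cast_nonneg) n
  split_ifs with hp hN
  · rw [zero_div, zero_add]
    exact hle
  · by_cases ha : (n : ZMod q) = a
    · have hlog : residueClass a n = Real.log n := by
        simp [residueClass, ha, vonMangoldt_apply_prime hp]
      rw [hlog, zero_div, zero_add,
        Set.indicator_of_mem (show n ∈ {p : ℕ | p.Prime ∧ (p : ZMod q) = a} from ⟨hp, ha⟩)]
      exact Real.log_div_rpow_le hx (mod_cast hp.pos)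
    · have hzero : residueClass a n = 0 := by simp [residueClass, ha]
      rw [hzero, zero_div, zero_div, zero_add]
      positivity
  · linarith [div_nonneg hr (n.cast_nonneg (α := ℝ))]
  · linarith [mul_nonneg hx₀ hg]

lemma tsum_residueClass_div_rpow_le
    (hg : Summable ({p : ℕ | p.Prime ∧ (p : ZMod q) = a}.indicator fun n => (n : ℝ)⁻¹))
    (N : ℕ) {x : ℝ} (hx : 1 < x) :
    ∑' n, residueClass a n / (n : ℝ) ^ x ≤
      ∑' n : ℕ, (if n.Prime then 0 else residueClass a n) / n +
      ∑ n ∈ Finset.range N, residueClass a n / (n : ℝ) +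
      (x - 1)⁻¹ *
        ∑' k, {p : ℕ | p.Prime ∧ (p : ZMod q) = a}.indicator (fun n => (n : ℝ)⁻¹) (k + N) := by
  set g := {p : ℕ | p.Prime ∧ (p : ZMod q) = a}.indicator fun n => (n : ℝ)⁻¹
  set h : ℕ → ℝ := fun n => if n < N then residueClass a n / n else (x - 1)⁻¹ * g n
  have hh : Summable h := by
    refine (summable_nat_add_iff N).mp ((hg.comp_injective (add_left_injective N)).mul_left
      (x - 1)⁻¹ |>.congr fun k => ?_)
    simp [h]
  have hnp : Summable fun n : ℕ => (if n.Prime then 0 else residueClass a n) / (n : ℝ) :=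
    summable_residueClass_non_primes_div a
  have hbound := residueClass_div_rpow_le (a := a) N hx
  have hlhs : Summable fun n : ℕ => residueClass a n / (n : ℝ) ^ x :=
    .of_nonneg_of_le (fun n => div_nonneg (residueClass_nonneg a n) (by positivity)) hbound
      (hnp.add hh)
  calc ∑' n, residueClass a n / (n : ℝ) ^ x
      ≤ ∑' n, ((if n.Prime then 0 else residueClass a n) / n + h n) :=
        hlhs.tsum_le_tsum hbound (hnp.add hh)
    _ = _ := by
      have hhead :
          ∑ n ∈ Finset.range N, h n = ∑ n ∈ Finset.range N, residueClass a n / (n : ℝ) :=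
        Finset.sum_congr rfl fun n hn => if_pos (Finset.mem_range.mp hn)
      have htail : ∑' k, h (k + N) = (x - 1)⁻¹ * ∑' k, g (k + N) := by
        rw [← tsum_mul_left]
        exact tsum_congr fun k => if_neg (Nat.not_lt.mpr (Nat.le_add_left N k))
      rw [hnp.tsum_add hh, ← hh.sum_add_tsum_nat_add N, hhead, htail, add_assoc]

end ArithmeticFunction.vonMangoldt

lemma Real.false_of_forall_div_sub_one_le {c B : ℝ} (hc : 0 < c)
    (h : ∀ x ∈ Set.Ioc (1 : ℝ) 2, c / (x - 1) ≤ B) : False := by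
  have hsub : Tendsto (fun x : ℝ => x - 1) (𝓝[>] 1) (𝓝[>] 0) := by
    refine tendsto_nhdsWithin_of_tendsto_nhds_of_eventually_within _ ?_ ?_
    · exact tendsto_nhdsWithin_of_tendsto_nhds
        (by simpa using (continuous_sub_right (1 : ℝ)).tendsto 1)
    · filter_upwards [self_mem_nhdsWithin] with x hx using sub_pos.mpr (Set.mem_Ioi.mp hx)
  have hlim : Tendsto (fun x : ℝ => c / (x - 1)) (𝓝[>] 1) atTop := by
    simpa [div_eq_mul_inv] using (tendsto_inv_nhdsGT_zero.comp hsub).const_mul_atTop hc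
  obtain ⟨x, hxB, hx⟩ :=
    ((hlim.eventually_gt_atTop B).and (Ioc_mem_nhdsGT (one_lt_two : (1 : ℝ) < 2))).exists
  exact absurd (h x hx) (not_le.mpr hxB)

open ArithmeticFunction vonMangoldt in
theorem Nat.not_summable_inv_on_primes_eq_mod {q : ℕ} [NeZero q] {a : ZMod q} (ha : IsUnit a) :
    ¬ Summable ({p : ℕ | p.Prime ∧ (p : ZMod q) = a}.indicator fun n => (n : ℝ)⁻¹) := by
  intro hg
  set c : ℝ := (q.totient : ℝ)⁻¹
  have hc : 0 < c := inv_pos.mpr (mod_cast q.totient.pos_of_neZero)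
  obtain ⟨C, hC⟩ := LSeries_residueClass_lower_bound ha
  obtain ⟨N, hN⟩ : ∃ N, ∑' k, {p : ℕ | p.Prime ∧ (p : ZMod q) = a}.indicator
      (fun n => (n : ℝ)⁻¹) (k + N) < c / 2 :=
    ((tendsto_sum_nat_add _).eventually (gt_mem_nhds (half_pos hc))).exists
  refine Real.false_of_forall_div_sub_one_le (half_pos hc) (B := C +
    ∑' n : ℕ, (if n.Prime then 0 else residueClass a n) / n +
    ∑ n ∈ Finset.range N, residueClass a n / (n : ℝ)) fun x hx => ?_
  have hx₀ : 0 < (x - 1)⁻¹ := inv_pos.mpr (sub_pos.mpr hx.1)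
  have hupper := tsum_residueClass_div_rpow_le hg N hx.1
  have htail := mul_le_mul_of_nonneg_left hN.le hx₀.le
  have hlower := hC hx
  rw [div_eq_mul_inv] at hlower ⊢
  linarith

lemma tendsto_prod_one_sub_of_not_summable {u : ℕ → ℝ} (hu₀ : ∀ i, 0 ≤ u i) (hu₁ : ∀ i, u i ≤ 1)
    (hu : ¬ Summable u) :
    Tendsto (fun N => ∏ i ∈ Finset.range N, (1 - u i)) atTop (𝓝 0) := by
  have hsum : Tendsto (fun N => ∑ i ∈ Finset.range N, u i) atTop atTop :=
    (not_summable_iff_tendsto_nat_atTop_of_nonneg hu₀).mp hu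
  refine squeeze_zero (fun N => Finset.prod_nonneg fun i _ => sub_nonneg.mpr (hu₁ i))
    (fun N => ?_) (Real.tendsto_exp_atBot.comp (tendsto_neg_atTop_atBot.comp hsum))
  rw [Function.comp_apply, Function.comp_apply, ← Finset.sum_neg_distrib, Real.exp_sum]
  exact Finset.prod_le_prod (fun i _ => sub_nonneg.mpr (hu₁ i))
    fun i _ => Real.one_sub_le_exp_neg (u i)

theorem stmt_13 (p : ℕ → ℕ) (hpmono : StrictMono p)
    (hp : ∀ i, (p i).Prime ∧ p i % 4 = 3)
    (hpall : ∀ q : ℕ, q.Prime → q % 4 = 3 → ∃ i, p i = q) :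
    Tendsto (fun N : ℕ => ∏ i ∈ Finset.range N, (1 - 1 / (p i : ℝ))) atTop (nhds 0) := by
  have hclass : ∀ n : ℕ, (n : ZMod 4) = 3 ↔ n % 4 = 3 := fun n =>
    ZMod.natCast_eq_natCast_iff' n 3 4
  have hrange : {q : ℕ | q.Prime ∧ (q : ZMod 4) = 3} = Set.range p := by
    ext q
    constructor
    · rintro ⟨hq, hq3⟩
      exact hpall q hq ((hclass q).mp hq3)
    · rintro ⟨i, rfl⟩
      exact ⟨(hp i).1, (hclass _).mpr (hp i).2⟩
  have hdiv : ¬ Summable fun i => 1 / (p i : ℝ) := by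
    have := Nat.not_summable_inv_on_primes_eq_mod (q := 4) (a := 3) (by decide)
    rw [hrange,
      ← hpmono.injective.summable_iff fun n hn => Set.indicator_of_notMem hn _] at this
    simpa [Function.comp_def, Set.indicator_of_mem (Set.mem_range_self _)] using this
  exact tendsto_prod_one_sub_of_not_summable (fun i => by positivity)
    (fun i => div_le_one_of_le₀ (mod_cast (hp i).1.one_lt.le) (by positivity)) hdiv
end

section
/- The set of positive integers possessing a prime factor d with d ≡ 3 mod 4 and d > M has natural density 1, for any fixed bound M. -/
/-!
Let `Q` be the product of a finite set `S` of primes `p ≡ 3 mod 4` with `p > M`. Every `n`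
sharing a factor with `Q` lies in the set, and among `1, …, T` at most
`φ(Q) (T / Q + 1) ≤ T ∏_{p ∈ S} (1 - 1/p) + Q` integers are coprime to `Q`. Since
`∏ (1 - 1/p) ≤ exp (-∑ 1/p)`, the lower density of the set is at least `1 - δ` for every `δ > 0`
once `∑ 1/p` diverges over the primes `p ≡ 3 mod 4`.

That divergence has an elementary proof. If the tail of the series beyond `N₀` were below `1/2`
and the tail beyond `N₁` below `1/(4m)`, where `m = 4 N₀!`, consider the `T` numbers
`m k + m - 1`, `k < T`. Each is `≡ 3 mod 4`, so has a prime factor `p ≡ 3 mod 4`, and `p > N₀`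
because `p ∤ m`. For `p < N₁` at most `T / p + 1` of these numbers are divisible by `p` (the `k`
form one residue class mod `p`), for larger `p` at most `m T / p`. Summing,
`T ≤ T/2 + N₁ + T/4`, which fails for `T > 4 N₁`.
-/

open Filter Finset
open scoped Nat

theorem Summable.exists_forall_sum_lt {f : ℕ → ℝ} (hf : Summable f) {ε : ℝ} (hε : 0 < ε) :
    ∃ N, ∀ t : Finset ℕ, (∀ n ∈ t, N ≤ n) → ∑ n ∈ t, f n < ε := by
  obtain ⟨s, hs⟩ := summable_iff_vanishing.1 hf (Set.Iio ε) (Iio_mem_nhds hε)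
  refine ⟨s.sup id + 1, fun t ht => hs t (disjoint_left.2 fun n hnt hns => ?_)⟩
  exact (ht n hnt).not_gt (Nat.lt_succ_of_le (le_sup (f := id) hns))

theorem Nat.exists_prime_mod_four_eq_three_dvd {n : ℕ} (hn : n % 4 = 3) :
    ∃ p, p.Prime ∧ p % 4 = 3 ∧ p ∣ n := by
  by_contra! h
  have hχ : ∀ p ∈ n.primeFactorsList, ZMod.χ₄ p = 1 := fun p hp => by
    have hpn := Nat.dvd_of_mem_primeFactorsList hp
    have hp := Nat.prime_of_mem_primeFactorsList hp
    have hp2 : p ≠ 2 := by rintro rfl; omega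
    have hodd := Nat.odd_iff.mp (hp.odd_of_ne_two hp2)
    have hp3 : p % 4 ≠ 3 := fun hp3 => h p hp hp3 hpn
    exact ZMod.χ₄_nat_one_mod_four (by omega)
  have := ZMod.χ₄_nat_three_mod_four hn
  rw [← Nat.prod_primeFactorsList (by omega : n ≠ 0), Nat.cast_list_prod, map_list_prod,
    List.prod_eq_one fun x hx => ?_] at this
  · exact absurd this (by decide)
  · simp only [List.map_map, List.mem_map] at hx
    obtain ⟨p, hp, rfl⟩ := hx
    exact hχ p hp

theorem Nat.Prime.dvd_four_mul_factorial_iff {p : ℕ} (hp : p.Prime) (hp4 : p % 4 = 3) (N : ℕ) :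
    p ∣ 4 * N ! ↔ p ≤ N := by
  have h4 : ¬ p ∣ 4 := fun h => by
    have : p = 3 := by have := Nat.le_of_dvd (by norm_num) h; omega
    subst this; norm_num at h
  rw [hp.prime.dvd_mul, hp.dvd_factorial, or_iff_right h4]

theorem card_le_div_add_one_of_modEq {s : Finset ℕ} {p T : ℕ}
    (hs : ∀ k ∈ s, k < T) (hmod : ∀ k ∈ s, ∀ l ∈ s, k ≡ l [MOD p]) : #s ≤ T / p + 1 := by
  calc #s ≤ #(range (T / p + 1)) := by
        refine card_le_card_of_injOn (· / p) (fun k hk => ?_) fun k hk l hl hkl => ?_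
        · simpa [Nat.lt_succ_iff] using Nat.div_le_div_right (c := p) (hs k hk).le
        · rw [← Nat.div_add_mod k p, ← Nat.div_add_mod l p]
          simp only at hkl
          rw [hkl, hmod k hk l hl]
    _ = T / p + 1 := card_range _

theorem card_filter_dvd_mul_add_le_div_add_one {m p : ℕ} (c T : ℕ)
    (hmp : m.Coprime p) : #{k ∈ range T | p ∣ m * k + c} ≤ T / p + 1 := by
  refine card_le_div_add_one_of_modEq (fun k hk => mem_range.1 (mem_filter.1 hk).1)
    fun k hk l hl => ?_
  have hk := (Nat.modEq_zero_iff_dvd.2 (mem_filter.1 hk).2)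
  have hl := (Nat.modEq_zero_iff_dvd.2 (mem_filter.1 hl).2)
  exact Nat.ModEq.cancel_left_of_coprime (Nat.coprime_comm.1 hmp)
    ((hk.trans hl.symm).add_right_cancel' c)

theorem card_filter_dvd_mul_add_le_mul_div {m c : ℕ} (p T : ℕ) (hc : 0 < c) (hcm : c ≤ m) :
    #{k ∈ range T | p ∣ m * k + c} ≤ m * T / p := by
  rw [← Nat.Ioc_filter_dvd_card_eq_div]
  refine card_le_card_of_injOn (fun k => m * k + c) (fun k hk => ?_) fun k _ l _ hkl => ?_
  · simp only [coe_filter, mem_range, Set.mem_ofPred_eq, mem_Ioc] at hk ⊢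
    have : m * (k + 1) ≤ m * T := Nat.mul_le_mul_left m hk.1
    refine ⟨⟨by omega, by rw [mul_add_one] at this; omega⟩, hk.2⟩
  · simp only at hkl
    exact Nat.eq_of_mul_eq_mul_left (show 0 < m by omega) (by omega)

theorem le_sum_div_primes_mod_four_eq_three (N₀ N₁ T : ℕ) :
    T ≤ ∑ p ∈ Ioo N₀ N₁ with p.Prime ∧ p % 4 = 3, (T / p + 1) +
      ∑ p ∈ Ico N₁ (4 * N₀ ! * T) with p.Prime ∧ p % 4 = 3, 4 * N₀ ! * T / p := by
  set m := (4 * N₀ !)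
  have hm : 0 < m := by positivity
  have hcover (k : ℕ) : ∃ p, p.Prime ∧ p % 4 = 3 ∧ N₀ < p ∧ p ∣ m * k + (m - 1) := by
    have h4 : 4 ∣ m * k := (dvd_mul_right 4 _).mul_right k
    obtain ⟨p, hp, hp4, hpn⟩ := Nat.exists_prime_mod_four_eq_three_dvd (n := m * k + (m - 1))
      (by omega)
    refine ⟨p, hp, hp4, not_le.1 fun hpN => hp.one_lt.ne' (Nat.dvd_one.1 ?_), hpn⟩
    have hpm := (hp.dvd_four_mul_factorial_iff hp4 N₀).2 hpN
    have : m * (k + 1) - (m * k + (m - 1)) = 1 := by rw [mul_add_one]; omega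
    exact this ▸ Nat.dvd_sub (hpm.mul_right _) hpn
  set F := fun p => {k ∈ range T | p ∣ m * k + (m - 1)}
  calc T = #(range T) := (card_range T).symm
    _ ≤ #({p ∈ Ioo N₀ N₁ | p.Prime ∧ p % 4 = 3}.biUnion F ∪
          {p ∈ Ico N₁ (m * T) | p.Prime ∧ p % 4 = 3}.biUnion F) := by
      refine card_le_card fun k hk => ?_
      obtain ⟨p, hp, hp4, hNp, hpk⟩ := hcover k
      have hpT : p < m * T := by
        have := Nat.le_of_dvd (by omega) hpk
        have : m * k + m ≤ m * T := by
          rw [← mul_add_one]; exact Nat.mul_le_mul_left m (mem_range.1 hk)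
        omega
      simp only [mem_union, mem_biUnion, mem_filter, mem_Ioo, mem_Ico, F]
      by_cases hpN : p < N₁
      · exact .inl ⟨p, ⟨⟨hNp, hpN⟩, hp, hp4⟩, hk, hpk⟩
      · exact .inr ⟨p, ⟨⟨not_lt.1 hpN, hpT⟩, hp, hp4⟩, hk, hpk⟩
    _ ≤ _ := (card_union_le _ _).trans (add_le_add card_biUnion_le card_biUnion_le)
    _ ≤ _ := by
      gcongr with p hp p hp
      · refine card_filter_dvd_mul_add_le_div_add_one _ _ (Nat.coprime_comm.1 ?_)
        simp only [mem_filter, mem_Ioo] at hp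
        obtain ⟨⟨hNp, -⟩, hp, hp4⟩ := hp
        exact hp.coprime_iff_not_dvd.2 (mt (hp.dvd_four_mul_factorial_iff hp4 N₀).1 (by omega))
      · exact card_filter_dvd_mul_add_le_mul_div _ _ (by omega) (by omega)

theorem not_summable_inv_primes_mod_four_eq_three :
    ¬ Summable ({p : ℕ | p.Prime ∧ p % 4 = 3}.indicator fun n : ℕ => (n : ℝ)⁻¹) := by
  intro hf
  have hsum {A : Finset ℕ} (hA : ∀ p ∈ A, p.Prime ∧ p % 4 = 3) :
      ∑ p ∈ A, {p : ℕ | p.Prime ∧ p % 4 = 3}.indicator (fun n : ℕ => (n : ℝ)⁻¹) p =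
        ∑ p ∈ A, (p : ℝ)⁻¹ :=
    sum_congr rfl fun p hp =>
      Set.indicator_of_mem (show p ∈ {p | p.Prime ∧ p % 4 = 3} from hA p hp) _
  obtain ⟨N₀, hN₀⟩ := hf.exists_forall_sum_lt one_half_pos
  set m := (4 * N₀ !)
  obtain ⟨N₁, hN₁⟩ := hf.exists_forall_sum_lt (ε := (4 * m : ℝ)⁻¹) (by positivity)
  set T := 4 * N₁ + 1
  set A₁ := {p ∈ Ioo N₀ N₁ | p.Prime ∧ p % 4 = 3}
  set A₂ := {p ∈ Ico N₁ (m * T) | p.Prime ∧ p % 4 = 3}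
  have h₁ : ∑ p ∈ A₁, (p : ℝ)⁻¹ < 1 / 2 := by
    rw [← hsum fun p hp => (mem_filter.1 hp).2]
    exact hN₀ _ fun p hp => (mem_Ioo.1 (mem_filter.1 hp).1).1.le
  have h₂ : ∑ p ∈ A₂, (p : ℝ)⁻¹ < (4 * m : ℝ)⁻¹ := by
    rw [← hsum fun p hp => (mem_filter.1 hp).2]
    exact hN₁ _ fun p hp => (mem_Ico.1 (mem_filter.1 hp).1).1
  have hA₁ : (#A₁ : ℝ) ≤ N₁ := by
    have : #A₁ ≤ N₁ :=
      (card_filter_le (Ioo N₀ N₁) _).trans (by rw [Nat.card_Ioo]; omega)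
    exact_mod_cast this
  have hT : (T : ℝ) ≤ T * ∑ p ∈ A₁, (p : ℝ)⁻¹ + #A₁ + m * T * ∑ p ∈ A₂, (p : ℝ)⁻¹ :=
    calc (T : ℝ) ≤ ((∑ p ∈ A₁, (T / p + 1) + ∑ p ∈ A₂, m * T / p : ℕ) : ℝ) := by
          exact_mod_cast le_sum_div_primes_mod_four_eq_three N₀ N₁ T
      _ ≤ ∑ p ∈ A₁, ((T : ℝ) / p + 1) + ∑ p ∈ A₂, (m * T : ℝ) / p := by
          push_cast
          gcongr <;> exact_mod_cast Nat.cast_div_le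
      _ = _ := by
          simp only [sum_add_distrib, mul_sum, div_eq_mul_inv, sum_const, nsmul_one]
  have hm : (0 : ℝ) < m := by positivity
  have h₂' : (m : ℝ) * ∑ p ∈ A₂, (p : ℝ)⁻¹ < 1 / 4 :=
    calc _ < (m : ℝ) * (4 * (m : ℝ))⁻¹ := mul_lt_mul_of_pos_left h₂ hm
      _ = 1 / 4 := by field_simp
  have hT0 : (0 : ℝ) ≤ T := by positivity
  have : (T : ℝ) = 4 * N₁ + 1 := by simp [T]
  nlinarith [mul_le_mul_of_nonneg_left h₁.le hT0, mul_le_mul_of_nonneg_left h₂'.le hT0]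

theorem exists_finset_prod_one_sub_inv_lt {P : Set ℕ}
    (hP : ¬ Summable (P.indicator fun n : ℕ => (n : ℝ)⁻¹)) (M : ℕ) {δ : ℝ} (hδ : 0 < δ) :
    ∃ S : Finset ℕ, (∀ p ∈ S, p ∈ P ∧ M < p) ∧ ∏ p ∈ S, (1 - (p : ℝ)⁻¹) < δ := by
  classical
  set g := (P ∩ Set.Ioi M).indicator fun n : ℕ => (n : ℝ)⁻¹
  have hg : ¬ Summable g := fun hg => hP <| (summable_nat_add_iff (M + 1)).1 <|
    ((summable_nat_add_iff (M + 1)).2 hg).congr fun n => by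
      simp [g, Set.indicator_apply, show M < n + (M + 1) by omega]
  have htend := (not_summable_iff_tendsto_nat_atTop_of_nonneg
    fun n => Set.indicator_nonneg (fun n _ => by positivity) n).1 hg
  obtain ⟨N, hN⟩ :=
    ((Real.tendsto_exp_neg_atTop_nhds_zero.comp htend).eventually (gt_mem_nhds hδ)).exists
  refine ⟨{p ∈ range N | p ∈ P ∧ M < p}, fun p hp => (mem_filter.1 hp).2, ?_⟩
  calc ∏ p ∈ range N with p ∈ P ∧ M < p, (1 - (p : ℝ)⁻¹)
      ≤ ∏ p ∈ range N with p ∈ P ∧ M < p, Real.exp (-(p : ℝ)⁻¹) := by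
        refine prod_le_prod (fun p hp => ?_) fun p _ => Real.one_sub_le_exp_neg _
        have : (1 : ℝ) ≤ p := by exact_mod_cast (mem_filter.1 hp).2.2.pos
        exact sub_nonneg.2 (inv_le_one_of_one_le₀ this)
    _ = Real.exp (-∑ n ∈ range N, g n) := by
        rw [← Real.exp_sum, sum_neg_distrib, sum_filter]
        simp [g, Set.indicator_apply]
    _ < δ := hN

theorem card_filter_exists_prime_dvd_ge (S : Finset ℕ) (hS : ∀ p ∈ S, p.Prime) (T : ℕ) :
    (T : ℝ) * (1 - ∏ p ∈ S, (1 - (p : ℝ)⁻¹)) - ∏ p ∈ S, (p : ℝ) ≤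
      #{n ∈ Icc 1 T | ∃ p ∈ S, p ∣ n} := by
  set Q := ∏ p ∈ S, p
  have hQ : 0 < Q := prod_pos fun p hp => (hS p hp).pos
  have hφ : (Q.totient : ℝ) = Q * ∏ p ∈ S, (1 - (p : ℝ)⁻¹) := by
    have := congrArg (Rat.cast : ℚ → ℝ) (Nat.totient_eq_mul_prod_factors Q)
    rw [Nat.primeFactors_prod hS] at this
    push_cast at this
    exact this
  have hcoprime : #{n ∈ Icc 1 T | Q.Coprime n} ≤ Q.totient * (T / Q + 1) := by
    simpa [add_comm 1 T, Ico_add_one_right_eq_Icc] using Nat.Ico_filter_coprime_le 1 T hQ.ne'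
  have hsplit : T ≤ #{n ∈ Icc 1 T | Q.Coprime n} + #{n ∈ Icc 1 T | ∃ p ∈ S, p ∣ n} :=
    calc T = #(Icc 1 T) := by simp
      _ = #{n ∈ Icc 1 T | Q.Coprime n} + #{n ∈ Icc 1 T | ¬ Q.Coprime n} :=
          (card_filter_add_card_filter_not (s := Icc 1 T) (Q.Coprime ·)).symm
      _ ≤ _ := by
          refine Nat.add_le_add_left (card_le_card fun n hn => ?_) _
          rw [mem_filter] at hn ⊢
          refine ⟨hn.1, not_forall_not.1 fun h => hn.2 ?_⟩
          exact Nat.Coprime.prod_left fun p hp =>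
            (hS p hp).coprime_iff_not_dvd.2 fun hpn => h p ⟨hp, hpn⟩
  have herror : ((Q.totient * (T / Q + 1) : ℕ) : ℝ) ≤ T * ∏ p ∈ S, (1 - (p : ℝ)⁻¹) + Q := by
    have hφQ : (Q.totient : ℝ) ≤ Q := by exact_mod_cast Nat.totient_le Q
    push_cast
    calc (Q.totient : ℝ) * ((T / Q : ℕ) + 1) ≤ Q.totient * ((T : ℝ) / Q + 1) := by
          gcongr; exact Nat.cast_div_le
      _ = T * ∏ p ∈ S, (1 - (p : ℝ)⁻¹) + Q.totient := by
          rw [hφ]; field_simp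
      _ ≤ _ := by linarith
  have : (T : ℝ) ≤ #{n ∈ Icc 1 T | Q.Coprime n} + #{n ∈ Icc 1 T | ∃ p ∈ S, p ∣ n} := by
    exact_mod_cast hsplit
  have : (#{n ∈ Icc 1 T | Q.Coprime n} : ℝ) ≤ ((Q.totient * (T / Q + 1) : ℕ) : ℝ) := by
    exact_mod_cast hcoprime
  simp only [Q, Nat.cast_prod] at *
  linarith

theorem one_sub_prod_sub_div_le_ncard_inter_Icc_div {X : Set ℕ} {S : Finset ℕ}
    (hS : ∀ p ∈ S, p.Prime) (hX : ∀ p ∈ S, ∀ n, p ∣ n → n ∈ X) {T : ℕ} (hT : 0 < T) :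
    (1 - ∏ p ∈ S, (1 - (p : ℝ)⁻¹)) - (∏ p ∈ S, (p : ℝ)) / T ≤
      ((X ∩ Set.Icc 1 T).ncard : ℝ) / T := by
  have hsub : ↑{n ∈ Icc 1 T | ∃ p ∈ S, p ∣ n} ⊆ X ∩ Set.Icc 1 T := fun n hn => by
    obtain ⟨hn, p, hpS, hpn⟩ := mem_filter.1 hn
    exact ⟨hX p hpS n hpn, by simpa using hn⟩
  have hcard : (#{n ∈ Icc 1 T | ∃ p ∈ S, p ∣ n} : ℝ) ≤ (X ∩ Set.Icc 1 T).ncard := by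
    rw [← Set.ncard_coe_finset]
    exact_mod_cast Set.ncard_le_ncard hsub ((Set.finite_Icc 1 T).inter_of_right _)
  have hTR : (0 : ℝ) < T := by exact_mod_cast hT
  rw [le_div_iff₀ hTR, sub_mul, div_mul_cancel₀ _ hTR.ne']
  linarith [card_filter_exists_prime_dvd_ge S hS T]

theorem stmt_18 (M : ℕ) :
    Tendsto (fun T : ℕ =>
      (({n : ℕ | ∃ d : ℕ, d.Prime ∧ d % 4 = 3 ∧ M < d ∧ d ∣ n} ∩ Set.Icc 1 T).ncard : ℝ) / T)
      atTop (nhds 1) := by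
  set X := {n : ℕ | ∃ d : ℕ, d.Prime ∧ d % 4 = 3 ∧ M < d ∧ d ∣ n}
  have hle (T : ℕ) : ((X ∩ Set.Icc 1 T).ncard : ℝ) / T ≤ 1 := by
    have : (X ∩ Set.Icc 1 T).ncard ≤ T :=
      (Set.ncard_le_ncard Set.inter_subset_right (Set.finite_Icc 1 T)).trans (by simp)
    exact div_le_one_of_le₀ (by exact_mod_cast this) (by positivity)
  refine tendsto_order.2
    ⟨fun a ha => ?_, fun a ha => Eventually.of_forall fun T => (hle T).trans_lt ha⟩
  obtain ⟨S, hS, hSa⟩ :=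
    exists_finset_prod_one_sub_inv_lt not_summable_inv_primes_mod_four_eq_three M (sub_pos.2 ha)
  have hlim : Tendsto (fun T : ℕ => (1 - ∏ p ∈ S, (1 - (p : ℝ)⁻¹)) - (∏ p ∈ S, (p : ℝ)) / T)
      atTop (nhds (1 - ∏ p ∈ S, (1 - (p : ℝ)⁻¹))) := by
    simpa using
      tendsto_const_nhds.sub (tendsto_const_div_atTop_nhds_zero_nat (∏ p ∈ S, (p : ℝ)))
  filter_upwards [hlim.eventually (lt_mem_nhds (show a < _ by linarith)), eventually_gt_atTop 0]
    with T haT hT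
  refine haT.trans_le (one_sub_prod_sub_div_le_ncard_inter_Icc_div (fun p hp => (hS p hp).1.1)
    (fun p hp n hpn => ?_) hT)
  exact ⟨p, (hS p hp).1.1, (hS p hp).1.2, (hS p hp).2, hpn⟩
end
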